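/- arXiv:1909.12863 — 2 statements merged into one kernel-verified Lean document; each statement's English description precedes it below -/
import Mathlib

section
/- Let P = {x ∈ ℝⁿ : Ax = b, Bx ≤ d} with integer data, let c ∈ ℤⁿ, and let u and v be vertices of P. If cᵀu ≠ cᵀv, then |cᵀu − cᵀv| ≥ 1/δ². -/
noncomputable section

variable {n mA mB : ℕ}

/-- The real matrix obtained from an integer matrix. -/
def rmat {m k : Type*} (M : Matrix m k ℤ) : Matrix m k ℝ := M.map (fun z => (z : ℝ))

/-- The real vector obtained from an integer vector. -/
def rvec {m : Type*} (v : m → ℤ) : m → ℝ := fun i => (v i : ℝ)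

/-- The feasible region `P = {x : Ax = b, Bx ≤ d}`. -/
def Pset (A : Matrix (Fin mA) (Fin n) ℤ) (B : Matrix (Fin mB) (Fin n) ℤ)
    (b : Fin mA → ℤ) (d : Fin mB → ℤ) : Set (Fin n → ℝ) :=
  {x | (rmat A).mulVec x = rvec b ∧ ∀ i, (rmat B).mulVec x i ≤ (d i : ℝ)}

/-- `g` is a circuit of the system `Ax = b, Bx ≤ d`:  `g` is a nonzero kernel element of `A`
whose image `Bg` is support-minimal among `{By : y ∈ ker A, y ≠ 0}`. -/
def IsCircuit (A : Matrix (Fin mA) (Fin n) ℤ) (B : Matrix (Fin mB) (Fin n) ℤ)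
    (g : Fin n → ℝ) : Prop :=
  g ≠ 0 ∧ (rmat A).mulVec g = 0 ∧
    ∀ y : Fin n → ℝ, y ≠ 0 → (rmat A).mulVec y = 0 →
      ¬ ({i | (rmat B).mulVec y i ≠ 0} ⊂ {i | (rmat B).mulVec g i ≠ 0})

/-- The set `C(A,B)` of circuits, normalized to have coprime integer components. -/
def CAB (A : Matrix (Fin mA) (Fin n) ℤ) (B : Matrix (Fin mB) (Fin n) ℤ) :
    Set (Fin n → ℝ) :=
  {g | IsCircuit A B g ∧ ∃ gz : Fin n → ℤ, (∀ i, g i = (gz i : ℝ)) ∧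
        Finset.univ.gcd (fun i => (gz i).natAbs) = 1}

/-- `cᵀx` for an integer objective `c` and a real point `x`. -/
def dotIC (c : Fin n → ℤ) (x : Fin n → ℝ) : ℝ := ∑ i, (c i : ℝ) * x i

/-- The 1-norm of a vector. -/
def norm1 (x : Fin n → ℝ) : ℝ := ∑ i, |x i|

/-- `α g` is a maximal augmentation at `x` (within `P`). -/
def IsMaxAug (P : Set (Fin n → ℝ)) (x g : Fin n → ℝ) (α : ℝ) : Prop :=
  0 < α ∧ x + α • g ∈ P ∧ ∀ ε : ℝ, 0 < ε → x + (α + ε) • g ∉ P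

/-- `δ`: the largest absolute value of the determinant of an `n × n` submatrix of the
stacked matrix `(A; B)`. -/
def deltaMax (A : Matrix (Fin mA) (Fin n) ℤ) (B : Matrix (Fin mB) (Fin n) ℤ) : ℝ :=
  sSup {r : ℝ | ∃ f : Fin n → (Fin mA ⊕ Fin mB), Function.Injective f ∧
        r = |((((Matrix.fromRows A B).submatrix f id).det : ℤ) : ℝ)|}

/-!
A vertex `u` of `P` is the unique solution of `n` linearly independent rows of `(A; B)` that are
tight at `u`; otherwise a nonzero direction orthogonal to all tight rows would move `u` both ways
inside `P`. If `M` is that `n × n` integer submatrix, Cramer's rule gives `(det M) u = adj M · w`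
with `w` integral, so `cᵀu = k / det M` with `k ∈ ℤ` and `1 ≤ |det M| ≤ δ`. Two distinct such
fractions `k / D` and `k' / D'` differ by at least `1 / |D D'| ≥ 1 / δ²`.
-/

open Matrix Filter Topology

lemma Matrix.exists_mulVec_eq_zero_of_span_rows_ne_top {m ι K : Type*} [Field K] [Fintype ι]
    [DecidableEq ι] (N : Matrix m ι K) (h : Submodule.span K (Set.range N) ≠ ⊤) :
    ∃ z, z ≠ 0 ∧ N *ᵥ z = 0 := by
  obtain ⟨f, hf, hle⟩ := (Submodule.span K (Set.range N)).exists_le_ker_of_lt_top h.lt_top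
  set z : ι → K := fun i => f (Pi.single i 1)
  have hf_eq : ∀ x, f x = x ⬝ᵥ z := fun x => by
    rw [f.pi_apply_eq_sum_univ x, dotProduct]
    refine Finset.sum_congr rfl fun i _ => ?_
    have hsingle : (fun j => if i = j then (1 : K) else 0) = Pi.single i 1 := by
      ext j; simp [Pi.single_apply, eq_comm]
    rw [smul_eq_mul, hsingle]
  refine ⟨z, fun hz => hf (LinearMap.ext fun x => by simp [hf_eq, hz]), ?_⟩
  ext j
  rw [mulVec, ← hf_eq]
  exact hle (Submodule.subset_span ⟨j, rfl⟩)

lemma exists_linearIndependent_comp_of_span_eq_top {ι K V : Type*} [Field K] [AddCommGroup V]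
    [Module K V] [FiniteDimensional K V] {k : ℕ} (hk : Module.finrank K V = k) (v : ι → V)
    (hv : Submodule.span K (Set.range v) = ⊤) :
    ∃ f : Fin k → ι, Function.Injective f ∧ LinearIndependent K (v ∘ f) := by
  obtain ⟨κ, a, ha, hspan, hli⟩ := exists_linearIndependent' K v
  have : Finite κ := hli.finite
  have : Fintype κ := Fintype.ofFinite κ
  have hcard : Fintype.card κ = k := by
    rw [linearIndependent_iff_card_eq_finrank_span.1 hli, Set.finrank, hspan, hv, finrank_top, hk]
  let e : Fin k ≃ κ := (Fintype.equivFinOfCardEq hcard).symm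
  exact ⟨a ∘ e, ha.comp e.injective, hli.comp e e.injective⟩

lemma eq_zero_of_mem_extremePoints_of_eventually_add_smul_mem {E : Type*} [AddCommGroup E]
    [Module ℝ E] {S : Set E} {x z : E} (hx : x ∈ S.extremePoints ℝ)
    (hz : ∀ᶠ t in 𝓝 (0 : ℝ), x + t • z ∈ S) : z = 0 := by
  obtain ⟨ε, hε, hball⟩ := Metric.eventually_nhds_iff.1 hz
  have hmem : ∀ t, |t| < ε → x + t • z ∈ S := fun t ht => hball (by simpa using ht)
  have hpos := hmem (ε / 2) (by rw [abs_of_pos (half_pos hε)]; linarith)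
  have hneg := hmem (-(ε / 2)) (by rw [abs_neg, abs_of_pos (half_pos hε)]; linarith)
  have hmid : x ∈ openSegment ℝ (x + (-(ε / 2)) • z) (x + (ε / 2) • z) :=
    ⟨1 / 2, 1 / 2, by norm_num, by norm_num, by norm_num, by module⟩
  simpa [hε.ne'] using hx.2 hneg hpos hmid

lemma rmat_fromRows {m₁ m₂ k : Type*} (A : Matrix m₁ k ℤ) (B : Matrix m₂ k ℤ) :
    rmat (fromRows A B) = fromRows (rmat A) (rmat B) :=
  fromRows_map A B _

lemma rmat_mulVec_rvec {m k : Type*} [Fintype k] (M : Matrix m k ℤ) (w : k → ℤ) :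
    rmat M *ᵥ rvec w = rvec (M *ᵥ w) :=
  funext fun i => ((Int.castRingHom ℝ).map_mulVec M w i).symm

lemma det_rmat {k : Type*} [Fintype k] [DecidableEq k] (M : Matrix k k ℤ) :
    (rmat M).det = M.det :=
  (Int.cast_det M).symm

lemma rmat_adjugate {k : Type*} [Fintype k] [DecidableEq k] (M : Matrix k k ℤ) :
    rmat M.adjugate = (rmat M).adjugate :=
  RingHom.map_adjugate (Int.castRingHom ℝ) M

def tightRows (A : Matrix (Fin mA) (Fin n) ℤ) (B : Matrix (Fin mB) (Fin n) ℤ)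
    (b : Fin mA → ℤ) (d : Fin mB → ℤ) (x : Fin n → ℝ) : Set (Fin mA ⊕ Fin mB) :=
  {j | (rmat (fromRows A B) *ᵥ x) j = rvec (Sum.elim b d) j}

section Polyhedron

variable {A : Matrix (Fin mA) (Fin n) ℤ} {B : Matrix (Fin mB) (Fin n) ℤ}
  {b : Fin mA → ℤ} {d : Fin mB → ℤ}

lemma eventually_add_smul_mem_Pset {x z : Fin n → ℝ} (hx : x ∈ Pset A B b d)
    (hz : ∀ j ∈ tightRows A B b d x, (rmat (fromRows A B) *ᵥ z) j = 0) :
    ∀ᶠ t in 𝓝 (0 : ℝ), x + t • z ∈ Pset A B b d := by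
  simp only [tightRows, rmat_fromRows, fromRows_mulVec, Set.mem_ofPred_eq] at hz
  have hAz : rmat A *ᵥ z = 0 := funext fun i => hz (.inl i) (by simp [hx.1, rvec])
  have hBz : ∀ i, ∀ᶠ t in 𝓝 (0 : ℝ), (rmat B *ᵥ (x + t • z)) i ≤ d i := by
    intro i
    simp only [mulVec_add, mulVec_smul, Pi.add_apply, Pi.smul_apply, smul_eq_mul]
    rcases (hx.2 i).eq_or_lt with htight | hslack
    · have hzi : (rmat B *ᵥ z) i = 0 := hz (.inr i) (by simpa [rvec] using htight)
      exact Eventually.of_forall fun t => by simp [hzi, htight]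
    · have hcont : Tendsto (fun t : ℝ => (rmat B *ᵥ x) i + t * (rmat B *ᵥ z) i) (𝓝 0)
          (𝓝 ((rmat B *ᵥ x) i)) :=
        (continuous_const.add (continuous_id.mul continuous_const)).tendsto' _ _ (by simp)
      exact (hcont.eventually (gt_mem_nhds hslack)).mono fun _ => le_of_lt
  filter_upwards [eventually_all.2 hBz] with t ht
  exact ⟨by rw [mulVec_add, mulVec_smul, hAz, smul_zero, add_zero, hx.1], ht⟩

lemma span_tightRows_eq_top {u : Fin n → ℝ} (hu : u ∈ (Pset A B b d).extremePoints ℝ) :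
    Submodule.span ℝ (Set.range fun j : tightRows A B b d u => rmat (fromRows A B) j) = ⊤ := by
  by_contra h
  obtain ⟨z, hz0, hz⟩ := exists_mulVec_eq_zero_of_span_rows_ne_top
    ((rmat (fromRows A B)).submatrix Subtype.val id) h
  exact hz0 <| eq_zero_of_mem_extremePoints_of_eventually_add_smul_mem hu <|
    eventually_add_smul_mem_Pset hu.1 fun j hj => congrFun hz ⟨j, hj⟩

lemma exists_subsystem_det_ne_zero_of_mem_extremePoints {u : Fin n → ℝ}
    (hu : u ∈ (Pset A B b d).extremePoints ℝ) :
    ∃ f : Fin n → Fin mA ⊕ Fin mB, Function.Injective f ∧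
      ((fromRows A B).submatrix f id).det ≠ 0 ∧
      rmat ((fromRows A B).submatrix f id) *ᵥ u = rvec (Sum.elim b d ∘ f) := by
  obtain ⟨f, hf, hli⟩ := exists_linearIndependent_comp_of_span_eq_top
    (Module.finrank_fin_fun ℝ) _ (span_tightRows_eq_top hu)
  refine ⟨Subtype.val ∘ f, Subtype.val_injective.comp hf, fun hdet => ?_, ?_⟩
  · have hunit : IsUnit (rmat ((fromRows A B).submatrix (Subtype.val ∘ f) id)).det :=
      (isUnit_iff_isUnit_det _).1 (linearIndependent_rows_iff_isUnit.1 hli)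
    rw [det_rmat, hdet, Int.cast_zero] at hunit
    exact not_isUnit_zero hunit
  · exact funext fun i => (f i).2

end Polyhedron

lemma abs_det_submatrix_le_deltaMax (A : Matrix (Fin mA) (Fin n) ℤ)
    (B : Matrix (Fin mB) (Fin n) ℤ) {f : Fin n → Fin mA ⊕ Fin mB} (hf : Function.Injective f) :
    |(((fromRows A B).submatrix f id).det : ℝ)| ≤ deltaMax A B := by
  refine le_csSup ?_ ⟨f, hf, rfl⟩
  refine ((Set.finite_range fun f : Fin n → Fin mA ⊕ Fin mB =>
    |(((fromRows A B).submatrix f id).det : ℝ)|).subset ?_).bddAbove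
  rintro r ⟨f, -, rfl⟩
  exact ⟨f, rfl⟩

lemma exists_int_eq_dotIC_mul_det {M : Matrix (Fin n) (Fin n) ℤ} {w : Fin n → ℤ}
    {x : Fin n → ℝ} (h : rmat M *ᵥ x = rvec w) (c : Fin n → ℤ) :
    ∃ k : ℤ, dotIC c x * M.det = k := by
  -- Cramer's rule: `det M • x = adj M *ᵥ w` is integral.
  have hcramer : (M.det : ℝ) • x = rvec (M.adjugate *ᵥ w) := by
    rw [← rmat_mulVec_rvec, ← h, rmat_adjugate, mulVec_mulVec, adjugate_mul, det_rmat,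
      smul_mulVec, one_mulVec]
  refine ⟨∑ i, c i * (M.adjugate *ᵥ w) i, ?_⟩
  rw [dotIC, Finset.sum_mul, Int.cast_sum]
  refine Finset.sum_congr rfl fun i _ => ?_
  rw [Int.cast_mul, mul_assoc, mul_comm (x i), ← smul_eq_mul (M.det : ℝ), ← Pi.smul_apply,
    hcramer, rvec]

lemma one_div_abs_mul_le_abs_sub {x y : ℝ} {p q : ℤ} (hp : p ≠ 0) (hq : q ≠ 0)
    (hx : ∃ k : ℤ, x * p = k) (hy : ∃ l : ℤ, y * q = l) (hxy : x ≠ y) :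
    1 / |(p : ℝ) * q| ≤ |x - y| := by
  obtain ⟨k, hk⟩ := hx
  obtain ⟨l, hl⟩ := hy
  have hpq : (p : ℝ) * q ≠ 0 := by positivity
  have hint : (x - y) * (p * q) = ((k * q - l * p : ℤ) : ℝ) := by
    push_cast
    rw [← hk, ← hl]
    ring
  have hne : k * q - l * p ≠ 0 := by
    rintro hzero
    rw [hzero, Int.cast_zero, mul_eq_zero] at hint
    exact hxy (sub_eq_zero.1 (hint.resolve_right hpq))
  rw [div_le_iff₀ (abs_pos.2 hpq), ← abs_mul, hint]
  exact_mod_cast Int.one_le_abs hne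

theorem vertex_objective_gap_general
    (A : Matrix (Fin mA) (Fin n) ℤ) (B : Matrix (Fin mB) (Fin n) ℤ)
    (b : Fin mA → ℤ) (d : Fin mB → ℤ) (c : Fin n → ℤ)
    (u v : Fin n → ℝ)
    (hu : u ∈ Set.extremePoints ℝ (Pset A B b d))
    (hv : v ∈ Set.extremePoints ℝ (Pset A B b d))
    (hne : dotIC c u ≠ dotIC c v) :
    1 / (deltaMax A B) ^ 2 ≤ |dotIC c u - dotIC c v| := by
  obtain ⟨f, hf, hdet_f, hu_f⟩ := exists_subsystem_det_ne_zero_of_mem_extremePoints hu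
  obtain ⟨g, hg, hdet_g, hv_g⟩ := exists_subsystem_det_ne_zero_of_mem_extremePoints hv
  have hδ_f := abs_det_submatrix_le_deltaMax A B hf
  have hδ_g := abs_det_submatrix_le_deltaMax A B hg
  have hdets : |(((fromRows A B).submatrix f id).det : ℝ) * ((fromRows A B).submatrix g id).det|
      ≤ deltaMax A B ^ 2 := by
    rw [abs_mul, sq]
    exact mul_le_mul hδ_f hδ_g (abs_nonneg _) ((abs_nonneg _).trans hδ_f)
  calc 1 / deltaMax A B ^ 2
      ≤ 1 / |(((fromRows A B).submatrix f id).det : ℝ) * ((fromRows A B).submatrix g id).det| :=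
        one_div_le_one_div_of_le (by positivity) hdets
    _ ≤ |dotIC c u - dotIC c v| :=
        one_div_abs_mul_le_abs_sub hdet_f hdet_g (exists_int_eq_dotIC_mul_det hu_f c)
          (exists_int_eq_dotIC_mul_det hv_g c) hne

/-- distinct objective values at vertices of `P` differ by at least `1/δ²`. -/
theorem vertex_objective_gap
    (A : Matrix (Fin mA) (Fin n) ℤ) (B : Matrix (Fin mB) (Fin n) ℤ)
    (b : Fin mA → ℤ) (d : Fin mB → ℤ) (c : Fin n → ℤ)
    (hmB : 1 ≤ mB)
    (hA : (rmat A).rank = mA)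
    (hAB : (rmat (Matrix.fromRows A B)).rank = n)
    (u v : Fin n → ℝ)
    (hu : u ∈ Set.extremePoints ℝ (Pset A B b d))
    (hv : v ∈ Set.extremePoints ℝ (Pset A B b d))
    (hne : dotIC c u ≠ dotIC c v) :
    1 / (deltaMax A B) ^ 2 ≤ |dotIC c u - dotIC c v| :=
  vertex_objective_gap_general A B b d c u v hu hv hne
end
end

section
/- Let P = {x ∈ ℝⁿ : Ax = b, Bx ≤ d} be bounded, let c ∈ ℤⁿ, and let x be a vertex of P that does not minimize cᵀx over P. Let αz be a steepest-descent augmentation at x and let α*z* be a greatest-improvement augmentation at x. Then cᵀx − cᵀ(x + αz) ≥ (ω₁/M₁)·(cᵀx − cᵀ(x + α*z*)). -/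
noncomputable section

variable {n mA mB : ℕ}

/-- An (exposed) face of `P`: the set of minimizers over `P` of some linear functional. -/
def IsFace (P F : Set (Fin n → ℝ)) : Prop :=
  ∃ w : Fin n → ℝ, F = {x ∈ P | ∀ y ∈ P, ∑ i, w i * x i ≤ ∑ i, w i * y i}

/-- The (affine) dimension of a subset of `ℝⁿ`. -/
def dimS (S : Set (Fin n → ℝ)) : ℕ := Module.finrank ℝ (affineSpan ℝ S).direction

/-- A facet of `P`: a face of dimension `dim P − 1`. -/
def IsFacet (P F : Set (Fin n → ℝ)) : Prop := IsFace P F ∧ dimS F + 1 = dimS P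

/-- `ω₁`: the minimum 1-norm distance from a vertex of `P` to a point on a facet of `P`
not containing that vertex. -/
def omega1 (P : Set (Fin n → ℝ)) : ℝ :=
  sInf {r : ℝ | ∃ v ∈ Set.extremePoints ℝ P, ∃ F : Set (Fin n → ℝ),
        IsFacet P F ∧ v ∉ F ∧ ∃ f ∈ F, r = norm1 (v - f)}

/-- `M₁`: the maximum 1-norm distance between two vertices of `P`. -/
def M1 (P : Set (Fin n → ℝ)) : ℝ :=
  sSup {r : ℝ | ∃ v₁ ∈ Set.extremePoints ℝ P, ∃ v₂ ∈ Set.extremePoints ℝ P,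
        r = norm1 (v₁ - v₂)}

/-- A greatest-improvement augmentation at `x`. -/
def IsGIAug (A : Matrix (Fin mA) (Fin n) ℤ) (B : Matrix (Fin mB) (Fin n) ℤ)
    (P : Set (Fin n → ℝ)) (c : Fin n → ℤ) (x g : Fin n → ℝ) (α : ℝ) : Prop :=
  g ∈ CAB A B ∧ IsMaxAug P x g α ∧
    ∀ (g' : Fin n → ℝ) (α' : ℝ), g' ∈ CAB A B → 0 < α' → x + α' • g' ∈ P →
      -(dotIC c (α' • g')) ≤ -(dotIC c (α • g))

/-- A steepest-descent augmentation at `x`: a maximal augmentation along a circuit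
maximizing `−cᵀg/‖g‖₁` among the circuits `g` with `x + εg ∈ P` for some `ε > 0`. -/
def IsSteepAug (A : Matrix (Fin mA) (Fin n) ℤ) (B : Matrix (Fin mB) (Fin n) ℤ)
    (P : Set (Fin n → ℝ)) (c : Fin n → ℤ) (x g : Fin n → ℝ) (α : ℝ) : Prop :=
  g ∈ CAB A B ∧ IsMaxAug P x g α ∧
    ∀ g' : Fin n → ℝ, g' ∈ CAB A B → (∃ ε : ℝ, 0 < ε ∧ x + ε • g' ∈ P) →
      -(dotIC c g') / norm1 g' ≤ -(dotIC c g) / norm1 g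


/-! ### Auxiliary development -/
/-!
Write `t = -cᵀz` and `t* = -cᵀz*`. Since `z*` is a feasible circuit direction at `x`, the
steepest-descent rule gives `t*/‖z*‖₁ ≤ t/‖z‖₁`. The step `α*z*` joins two points of `P`, and `P`
is the convex hull of its finitely many vertices, so convexity of the 1-norm gives
`α*‖z*‖₁ ≤ M₁`. The step `αz` is maximal, so `x + αz` satisfies with equality an inequality
`Bᵢy ≤ dᵢ` that is slack at `x`; the face it defines contains `x + αz` but not `x` and can be
enlarged to a facet with the same property, whence `ω₁ ≤ α‖z‖₁`. Altogether
`(ω₁/M₁)·α*t* ≤ ω₁·t*/‖z*‖₁ ≤ α‖z‖₁·t/‖z‖₁ = αt`.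

A face `F` of a polytope with `dim F ≤ dim P - 2` containing `p` but not `x` is enlarged by
rotating its supporting hyperplane about `aff F`, towards a vertex off `aff (F ∪ {x})` and away
from `x`, until it meets a new vertex.
-/

open Set Matrix Filter Topology

lemma norm1_eq_norm_toLp (x : Fin n → ℝ) : norm1 x = ‖WithLp.toLp 1 x‖ := by
  simp [norm1, PiLp.norm_eq_of_L1]

lemma norm1_nonneg (x : Fin n → ℝ) : 0 ≤ norm1 x := by
  rw [norm1_eq_norm_toLp]; exact norm_nonneg _

lemma norm1_pos {x : Fin n → ℝ} (hx : x ≠ 0) : 0 < norm1 x := by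
  rw [norm1_eq_norm_toLp]; exact norm_pos_iff.2 (by simpa using hx)

lemma norm1_smul (t : ℝ) (x : Fin n → ℝ) : norm1 (t • x) = |t| * norm1 x := by
  simp [norm1_eq_norm_toLp, norm_smul]

lemma norm1_sub_comm (x y : Fin n → ℝ) : norm1 (x - y) = norm1 (y - x) := by
  simp only [norm1_eq_norm_toLp, WithLp.toLp_sub, norm_sub_rev]

lemma convexOn_norm1_sub (r : Fin n → ℝ) : ConvexOn ℝ univ fun q => norm1 (q - r) := by
  refine ⟨convex_univ, fun a _ b _ s t hs ht hst => ?_⟩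
  have hsplit : s • a + t • b - r = s • (a - r) + t • (b - r) := by
    rw [smul_sub, smul_sub, sub_add_sub_comm, ← add_smul, hst, one_smul]
  simp only [hsplit, norm1_eq_norm_toLp, WithLp.toLp_add, WithLp.toLp_smul, smul_eq_mul]
  refine (norm_add_le _ _).trans_eq ?_
  rw [norm_smul, norm_smul, Real.norm_of_nonneg hs, Real.norm_of_nonneg ht]

lemma norm1_sub_le_M1 {P : Set (Fin n → ℝ)} (hfin : (extremePoints ℝ P).Finite)
    (hP : convexHull ℝ (extremePoints ℝ P) = P) {q r : Fin n → ℝ} (hq : q ∈ P) (hr : r ∈ P) :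
    norm1 (q - r) ≤ M1 P := by
  have hfar : ∀ {q} r, q ∈ P → ∃ v ∈ extremePoints ℝ P, norm1 (q - r) ≤ norm1 (v - r) :=
    fun r hq => (convexOn_norm1_sub r).exists_ge_of_mem_convexHull (subset_univ _) (by rwa [hP])
  obtain ⟨v₁, hv₁, h₁⟩ := hfar r hq
  obtain ⟨v₂, hv₂, h₂⟩ := hfar v₁ hr
  have hbdd : BddAbove {s | ∃ v₁ ∈ extremePoints ℝ P, ∃ v₂ ∈ extremePoints ℝ P,
      s = norm1 (v₁ - v₂)} :=
    (hfin.image2 (fun a b => norm1 (a - b)) hfin).bddAbove.mono <| by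
      rintro _ ⟨a, ha, b, hb, rfl⟩
      exact mem_image2_of_mem ha hb
  calc norm1 (q - r) ≤ norm1 (v₁ - r) := h₁
    _ = norm1 (r - v₁) := norm1_sub_comm _ _
    _ ≤ norm1 (v₂ - v₁) := h₂
    _ ≤ M1 P := le_csSup hbdd ⟨v₂, hv₂, v₁, hv₁, rfl⟩

lemma dotIC_smul (c : Fin n → ℤ) (t : ℝ) (g : Fin n → ℝ) : dotIC c (t • g) = t * dotIC c g :=
  dotProduct_smul t (rvec c) g

lemma dotIC_sub_dotIC_add_smul (c : Fin n → ℤ) (x g : Fin n → ℝ) (t : ℝ) :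
    dotIC c x - dotIC c (x + t • g) = t * -dotIC c g := by
  change rvec c ⬝ᵥ x - rvec c ⬝ᵥ (x + t • g) = t * -(rvec c ⬝ᵥ g)
  rw [dotProduct_add, dotProduct_smul, smul_eq_mul]
  ring

lemma exists_dotProduct_eq_one_of_notMem {K ι : Type*} [Field K] [Fintype ι] [DecidableEq ι]
    {C : Submodule K (ι → K)} {v : ι → K} (hv : v ∉ C) :
    ∃ u : ι → K, (∀ e ∈ C, u ⬝ᵥ e = 0) ∧ u ⬝ᵥ v = 1 := by
  obtain ⟨f, hfv, hCf⟩ := Submodule.exists_le_ker_of_notMem hv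
  have hdot : ∀ (g : Module.Dual K (ι → K)) y, (dotProductEquiv K ι).symm g ⬝ᵥ y = g y :=
    fun g y => by rw [← dotProductEquiv_apply_apply, LinearEquiv.apply_symm_apply]
  refine ⟨(dotProductEquiv K ι).symm ((f v)⁻¹ • f), fun e he => ?_, ?_⟩
  · rw [hdot, LinearMap.smul_apply, LinearMap.mem_ker.1 (hCf he), smul_zero]
  · rw [hdot, LinearMap.smul_apply, smul_eq_mul, inv_mul_cancel₀ hfv]

lemma exists_dotProduct_eq_one_eq_neg_one {K ι : Type*} [Field K] [Fintype ι] [DecidableEq ι]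
    {D : Submodule K (ι → K)} {a b : ι → K} (ha : a ∉ D) (hb : b ∉ D ⊔ K ∙ a) :
    ∃ u : ι → K, (∀ e ∈ D, u ⬝ᵥ e = 0) ∧ u ⬝ᵥ a = 1 ∧ u ⬝ᵥ b = -1 := by
  obtain ⟨u₀, hu₀D, hu₀a⟩ := exists_dotProduct_eq_one_of_notMem ha
  obtain ⟨u₁, hu₁C, hu₁b⟩ := exists_dotProduct_eq_one_of_notMem hb
  have hu₁a : u₁ ⬝ᵥ a = 0 := hu₁C a (Submodule.mem_sup_right (Submodule.mem_span_singleton_self a))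
  refine ⟨u₀ - (u₀ ⬝ᵥ b + 1) • u₁, fun e he => ?_, ?_, ?_⟩
  · simp [sub_dotProduct, hu₀D e he, hu₁C e (Submodule.mem_sup_left he)]
  · simp [sub_dotProduct, hu₀a, hu₁a]
  · simp [sub_dotProduct, hu₁b]

def faceSet (P : Set (Fin n → ℝ)) (w : Fin n → ℝ) : Set (Fin n → ℝ) :=
  {q ∈ P | ∀ y ∈ P, w ⬝ᵥ q ≤ w ⬝ᵥ y}

section Faces

variable {P : Set (Fin n → ℝ)} {w p : Fin n → ℝ}

lemma isFace_faceSet : IsFace P (faceSet P w) := ⟨w, rfl⟩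

lemma mem_faceSet_of_mem_affineSpan {q : Fin n → ℝ} (hp : p ∈ faceSet P w) (hq : q ∈ P)
    (hspan : q ∈ affineSpan ℝ (faceSet P w)) : q ∈ faceSet P w := by
  have hle : affineSpan ℝ (faceSet P w) ≤
      AffineSubspace.mk' p (LinearMap.ker (dotProductEquiv ℝ (Fin n) w)) := by
    refine affineSpan_le.2 fun y hy => ?_
    simp [AffineSubspace.mem_mk', dotProduct_sub, le_antisymm (hy.2 p hp.1) (hp.2 y hy.1)]
  have hwq : w ⬝ᵥ q = w ⬝ᵥ p := by
    simpa [AffineSubspace.mem_mk', dotProduct_sub, sub_eq_zero] using hle hspan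
  exact ⟨hq, fun y hy => hwq ▸ hp.2 y hy⟩

lemma dimS_faceSet_lt {F : Set (Fin n → ℝ)} {v : Fin n → ℝ} (hFP : F ⊆ P)
    (hsub : faceSet P w ⊆ F) (hp : p ∈ faceSet P w) (hv : v ∈ F) (hvF : v ∉ faceSet P w) :
    dimS (faceSet P w) < dimS F := by
  by_contra! hle
  have hspan := affineSpan_mono ℝ hsub
  have heq : affineSpan ℝ (faceSet P w) = affineSpan ℝ F :=
    AffineSubspace.ext_of_direction_eq
      (Submodule.eq_of_le_of_finrank_le (AffineSubspace.direction_le hspan) hle)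
      ⟨p, subset_affineSpan ℝ _ hp, hspan (subset_affineSpan ℝ _ hp)⟩
  exact hvF (mem_faceSet_of_mem_affineSpan hp (hFP hv) (heq ▸ subset_affineSpan ℝ _ hv))

end Faces

section Polytope

variable {V : Set (Fin n → ℝ)} {w p : Fin n → ℝ}

lemma mem_faceSet_convexHull (hp : p ∈ convexHull ℝ V) (hmin : ∀ v ∈ V, w ⬝ᵥ p ≤ w ⬝ᵥ v) :
    p ∈ faceSet (convexHull ℝ V) w :=
  ⟨hp, fun _ hy => convexHull_min hmin (convex_halfSpace_ge (dotProductEquiv ℝ _ w).isLinear _) hy⟩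

/-- `t` is the largest value for which `w + t • u` is still minimized at `p` over `V`. -/
lemma exists_rotated_faceSet (hV : V.Finite) {u v : Fin n → ℝ}
    (hp : p ∈ faceSet (convexHull ℝ V) w)
    (hu : ∀ q ∈ faceSet (convexHull ℝ V) w, u ⬝ᵥ q = u ⬝ᵥ p) (hv : v ∈ V) (huv : u ⬝ᵥ v < u ⬝ᵥ p) :
    ∃ t : ℝ, 0 < t ∧ faceSet (convexHull ℝ V) w ⊆ faceSet (convexHull ℝ V) (w + t • u) ∧
      ∃ v' ∈ V, v' ∈ faceSet (convexHull ℝ V) (w + t • u) ∧ v' ∉ faceSet (convexHull ℝ V) w := by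
  set P := convexHull ℝ V
  set S := hV.toFinset.filter fun y => u ⬝ᵥ y < u ⬝ᵥ p
  have hS : ∀ y, y ∈ S ↔ y ∈ V ∧ u ⬝ᵥ y < u ⬝ᵥ p := by simp [S]
  have hnotF : ∀ y, u ⬝ᵥ y < u ⬝ᵥ p → y ∉ faceSet P w := fun y huy hy => (hu y hy).not_lt huy
  have hgap : ∀ y ∈ S, w ⬝ᵥ p < w ⬝ᵥ y := fun y hy => by
    obtain ⟨hyV, huy⟩ := (hS y).1 hy
    by_contra! h
    exact hnotF y huy ⟨subset_convexHull ℝ V hyV, fun z hz => h.trans (hp.2 z hz)⟩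
  set ratio : (Fin n → ℝ) → ℝ := fun y => (w ⬝ᵥ y - w ⬝ᵥ p) / (u ⬝ᵥ p - u ⬝ᵥ y)
  obtain ⟨v', hv'S, ht⟩ := S.exists_min_image ratio ⟨v, (hS v).2 ⟨hv, huv⟩⟩
  obtain ⟨hv'V, huv'⟩ := (hS v').1 hv'S
  have htpos : 0 < ratio v' := div_pos (sub_pos.2 (hgap v' hv'S)) (sub_pos.2 huv')
  set t := ratio v'
  have hdot : ∀ y, (w + t • u) ⬝ᵥ y = w ⬝ᵥ y + t * u ⬝ᵥ y := fun y => by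
    rw [add_dotProduct, smul_dotProduct, smul_eq_mul]
  have hpF' : p ∈ faceSet P (w + t • u) := by
    refine mem_faceSet_convexHull hp.1 fun y hy => ?_
    rw [hdot, hdot]
    rcases le_or_gt (u ⬝ᵥ p) (u ⬝ᵥ y) with h | h
    · nlinarith [hp.2 y (subset_convexHull ℝ V hy)]
    · have := ht y ((hS y).2 ⟨hy, h⟩)
      rw [le_div_iff₀ (sub_pos.2 h)] at this
      linarith
  have hsupp : ∀ q ∈ P, (w + t • u) ⬝ᵥ q = (w + t • u) ⬝ᵥ p → q ∈ faceSet P (w + t • u) :=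
    fun q hq hq' => ⟨hq, fun y hy => hq' ▸ hpF'.2 y hy⟩
  refine ⟨t, htpos, fun q hq => hsupp q hq.1 ?_, v', hv'V,
    hsupp v' (subset_convexHull ℝ V hv'V) ?_, hnotF v' huv'⟩
  · rw [hdot, hdot, hu q hq, le_antisymm (hq.2 p hp.1) (hp.2 q hq.1)]
  · rw [hdot, hdot]
    simp only [t, ratio]
    field_simp [(sub_pos.2 huv').ne']
    ring

lemma exists_faceSet_dimS_lt (hV : V.Finite) {x : Fin n → ℝ}
    (hp : p ∈ faceSet (convexHull ℝ V) w) (hx : x ∈ convexHull ℝ V)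
    (hxF : x ∉ faceSet (convexHull ℝ V) w)
    (hdim : dimS (faceSet (convexHull ℝ V) w) + 2 ≤ dimS (convexHull ℝ V)) :
    ∃ w', faceSet (convexHull ℝ V) w ⊆ faceSet (convexHull ℝ V) w' ∧
      x ∉ faceSet (convexHull ℝ V) w' ∧
      dimS (faceSet (convexHull ℝ V) w) < dimS (faceSet (convexHull ℝ V) w') := by
  set P := convexHull ℝ V
  set D := (affineSpan ℝ (faceSet P w)).direction
  have hxD : x - p ∉ D := fun h => hxF <| mem_faceSet_of_mem_affineSpan hp hx <| by
    simpa using AffineSubspace.vadd_mem_of_mem_direction h (subset_affineSpan ℝ _ hp)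
  obtain ⟨v, hv, hvC⟩ : ∃ v ∈ V, v - p ∉ D ⊔ ℝ ∙ (x - p) := by
    by_contra! hVC
    have hspan : affineSpan ℝ P ≤ AffineSubspace.mk' p (D ⊔ ℝ ∙ (x - p)) := by
      rw [affineSpan_convexHull]
      exact affineSpan_le.2 fun v hv => AffineSubspace.mem_mk'.2 (hVC v hv)
    have h₁ : dimS P ≤ Module.finrank ℝ ↥(D ⊔ ℝ ∙ (x - p)) := Submodule.finrank_mono <| by
      simpa using AffineSubspace.direction_le hspan
    have h₂ := Submodule.finrank_add_le_finrank_add_finrank D (ℝ ∙ (x - p))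
    rw [finrank_span_singleton fun h => hxD (by rw [h]; exact D.zero_mem)] at h₂
    have h₃ : dimS (faceSet P w) = Module.finrank ℝ D := rfl
    omega
  obtain ⟨u, huD, hux, huv⟩ := exists_dotProduct_eq_one_eq_neg_one hxD hvC
  have hu : ∀ q ∈ faceSet P w, u ⬝ᵥ q = u ⬝ᵥ p := fun q hq => by
    have := huD (q - p) <| by
      simpa using AffineSubspace.vsub_mem_direction (subset_affineSpan ℝ _ hq)
        (subset_affineSpan ℝ _ hp)
    rwa [dotProduct_sub, sub_eq_zero] at this
  rw [dotProduct_sub] at hux huv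
  obtain ⟨t, ht, hsub, v', -, hv'F', hv'F⟩ := exists_rotated_faceSet hV hp hu hv (by linarith)
  refine ⟨w + t • u, hsub, fun hxF' => ?_, dimS_faceSet_lt (fun _ h => h.1) hsub hp hv'F' hv'F⟩
  have h₁ := hxF'.2 p hp.1
  have h₂ := hp.2 x hx
  simp only [add_dotProduct, smul_dotProduct, smul_eq_mul] at h₁
  nlinarith

lemma exists_isFacet (hV : V.Finite) {x : Fin n → ℝ} (hp : p ∈ faceSet (convexHull ℝ V) w)
    (hx : x ∈ convexHull ℝ V) (hxF : x ∉ faceSet (convexHull ℝ V) w) :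
    ∃ G, IsFacet (convexHull ℝ V) G ∧ p ∈ G ∧ x ∉ G := by
  induction h : dimS (convexHull ℝ V) - dimS (faceSet (convexHull ℝ V) w)
    using Nat.strong_induction_on generalizing w with
  | _ k ih =>
    have hlt := dimS_faceSet_lt (fun _ h => h) (fun _ h => h.1) hp hx hxF
    by_cases hfacet : dimS (faceSet (convexHull ℝ V) w) + 1 = dimS (convexHull ℝ V)
    · exact ⟨_, ⟨isFace_faceSet, hfacet⟩, hp, hxF⟩
    · obtain ⟨w', hsub, hxF', hdim⟩ := exists_faceSet_dimS_lt hV hp hx hxF (by omega)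
      exact ih _ (by omega) (hsub hp) hxF' rfl

end Polytope

section Polyhedron

variable {A : Matrix (Fin mA) (Fin n) ℤ} {B : Matrix (Fin mB) (Fin n) ℤ}
  {b : Fin mA → ℤ} {d : Fin mB → ℤ}

lemma convex_Pset : Convex ℝ (Pset A B b d) := by
  intro u hu v hv s t hs ht hst
  refine ⟨by rw [mulVec_add, mulVec_smul, mulVec_smul, hu.1, hv.1, ← add_smul, hst, one_smul],
    fun i => ?_⟩
  simp only [mulVec_add, mulVec_smul, Pi.add_apply, Pi.smul_apply, smul_eq_mul]
  have hd : s * d i + t * d i = d i := by rw [← add_mul, hst, one_mul]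
  nlinarith [mul_le_mul_of_nonneg_left (hu.2 i) hs, mul_le_mul_of_nonneg_left (hv.2 i) ht]

lemma isClosed_Pset : IsClosed (Pset A B b d) := by
  have hcont : ∀ {k} (M : Matrix (Fin k) (Fin n) ℝ), Continuous M.mulVec :=
    fun M => M.mulVecLin.continuous_of_finiteDimensional
  have hineq : IsClosed {x : Fin n → ℝ | ∀ i, (rmat B *ᵥ x) i ≤ d i} := by
    rw [ofPred_forall]
    exact isClosed_iInter fun i =>
      isClosed_le ((continuous_apply i).comp (hcont _)) continuous_const
  exact (isClosed_eq (hcont _) continuous_const).inter hineq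

lemma eventually_add_smul_mem_Pset_s11 {y g : Fin n → ℝ} (hy : y ∈ Pset A B b d)
    (hg : rmat A *ᵥ g = 0) (htight : ∀ i, (rmat B *ᵥ y) i = d i → (rmat B *ᵥ g) i ≤ 0) :
    ∀ᶠ s in 𝓝[>] (0 : ℝ), y + s • g ∈ Pset A B b d := by
  have hrow : ∀ i, ∀ᶠ s in 𝓝[>] (0 : ℝ), (rmat B *ᵥ y) i + s * (rmat B *ᵥ g) i ≤ d i := by
    intro i
    rcases (hy.2 i).eq_or_lt with h | h
    · filter_upwards [self_mem_nhdsWithin] with s (hs : 0 < s)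
      nlinarith [htight i h]
    · have hcont : Continuous fun s : ℝ => (rmat B *ᵥ y) i + s * (rmat B *ᵥ g) i := by
        fun_prop
      have := (hcont.tendsto' 0 _ (by simp)).eventually (eventually_lt_nhds h)
      exact nhdsWithin_le_nhds (this.mono fun _ hs => hs.le)
  filter_upwards [eventually_all.2 hrow] with s hs
  refine ⟨by rw [mulVec_add, mulVec_smul, hg, smul_zero, add_zero, hy.1], fun i => ?_⟩
  simpa [mulVec_add, mulVec_smul] using hs i

lemma eq_zero_of_mem_extremePoints_Pset {v u : Fin n → ℝ}
    (hv : v ∈ extremePoints ℝ (Pset A B b d)) (hu : rmat A *ᵥ u = 0)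
    (htight : ∀ i, (rmat B *ᵥ v) i = d i → (rmat B *ᵥ u) i = 0) : u = 0 := by
  have hfwd := eventually_add_smul_mem_Pset_s11 hv.1 hu fun i h => (htight i h).le
  have hbwd := eventually_add_smul_mem_Pset_s11 (g := -u) hv.1 (by simp [mulVec_neg, hu])
    fun i h => by simp [mulVec_neg, htight i h]
  obtain ⟨s, ⟨hs₁, hs₂⟩, hs⟩ := ((hfwd.and hbwd).and self_mem_nhdsWithin).exists
  have hseg : v ∈ openSegment ℝ (v + s • u) (v + s • -u) :=
    ⟨1 / 2, 1 / 2, by norm_num, by norm_num, by norm_num, by module⟩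
  simpa [(hs : (0 : ℝ) < s).ne'] using hv.2 hs₁ hs₂ hseg

/-- A vertex is determined by the set of inequalities it satisfies with equality. -/
lemma finite_extremePoints_Pset : (extremePoints ℝ (Pset A B b d)).Finite := by
  refine Finite.of_finite_image (f := fun v => {i | (rmat B *ᵥ v) i = d i}) (toFinite _)
    fun v hv w hw hvw => ?_
  have htight : ∀ i, (rmat B *ᵥ v) i = d i → (rmat B *ᵥ (w - v)) i = 0 := fun i hi => by
    have hwi : (rmat B *ᵥ w) i = d i := (congrArg (i ∈ ·) hvw).mp hi
    simp [mulVec_sub, hi, hwi]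
  have := eq_zero_of_mem_extremePoints_Pset hv
    (by rw [mulVec_sub, hv.1.1, hw.1.1, sub_self]) htight
  exact (sub_eq_zero.1 this).symm

lemma convexHull_extremePoints_Pset (hbdd : Bornology.IsBounded (Pset A B b d)) :
    convexHull ℝ (extremePoints ℝ (Pset A B b d)) = Pset A B b d := by
  rw [← (finite_extremePoints_Pset.isClosed_convexHull (𝕜 := ℝ)).closure_eq]
  exact closure_convexHull_extremePoints
    (Metric.isCompact_of_isClosed_isBounded isClosed_Pset hbdd) convex_Pset

lemma exists_tight_of_isMaxAug {x g : Fin n → ℝ} {α : ℝ} (hx : x ∈ Pset A B b d)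
    (hmax : IsMaxAug (Pset A B b d) x g α) :
    ∃ i, (rmat B *ᵥ (x + α • g)) i = d i ∧ 0 < (rmat B *ᵥ g) i := by
  obtain ⟨hα, hp, hfar⟩ := hmax
  have hg : rmat A *ᵥ g = 0 := by
    have := hp.1
    rw [mulVec_add, mulVec_smul, hx.1, add_eq_left, smul_eq_zero] at this
    exact this.resolve_left hα.ne'
  by_contra! hnone
  obtain ⟨ε, hmem, hε⟩ :=
    ((eventually_add_smul_mem_Pset_s11 hp hg hnone).and self_mem_nhdsWithin).exists
  exact hfar ε hε (by rwa [add_smul, ← add_assoc])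

lemma omega1_le_of_isMaxAug (hbdd : Bornology.IsBounded (Pset A B b d)) {x g : Fin n → ℝ}
    {α : ℝ} (hx : x ∈ extremePoints ℝ (Pset A B b d)) (hmax : IsMaxAug (Pset A B b d) x g α) :
    omega1 (Pset A B b d) ≤ α * norm1 g := by
  obtain ⟨i, hpi, hgi⟩ := exists_tight_of_isMaxAug hx.1 hmax
  have hdot : ∀ y, -rmat B i ⬝ᵥ y = -(rmat B *ᵥ y) i := fun y => neg_dotProduct _ _
  have hpF : x + α • g ∈ faceSet (Pset A B b d) (-rmat B i) :=
    ⟨hmax.2.1, fun y hy => by rw [hdot, hdot, hpi]; linarith [hy.2 i]⟩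
  have hxF : x ∉ faceSet (Pset A B b d) (-rmat B i) := fun h => by
    have hle := h.2 _ hmax.2.1
    rw [hdot, hdot, hpi] at hle
    simp only [mulVec_add, mulVec_smul, Pi.add_apply, Pi.smul_apply, smul_eq_mul] at hpi
    nlinarith [hmax.1]
  have hPV := convexHull_extremePoints_Pset hbdd
  rw [← hPV] at hpF hxF
  obtain ⟨G, hG, hpG, hxG⟩ :=
    exists_isFacet finite_extremePoints_Pset hpF (by rw [hPV]; exact hx.1) hxF
  rw [hPV] at hG
  refine csInf_le ⟨0, ?_⟩ ⟨x, hx, G, hG, hxG, _, hpG, ?_⟩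
  · rintro _ ⟨-, -, -, -, -, f, -, rfl⟩
    exact norm1_nonneg _
  · rw [sub_add_cancel_left, ← neg_smul, norm1_smul, abs_neg, abs_of_pos hmax.1]

end Polyhedron

lemma omega1_nonneg (P : Set (Fin n → ℝ)) : 0 ≤ omega1 P :=
  Real.sInf_nonneg <| by
    rintro _ ⟨-, -, -, -, -, f, -, rfl⟩
    exact norm1_nonneg _

lemma dotIC_nonpos_of_isGIAug {A : Matrix (Fin mA) (Fin n) ℤ} {B : Matrix (Fin mB) (Fin n) ℤ}
    {P : Set (Fin n → ℝ)} {c : Fin n → ℤ} {x g : Fin n → ℝ} {α : ℝ} (hP : Convex ℝ P)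
    (hx : x ∈ P) (h : IsGIAug A B P c x g α) : dotIC c g ≤ 0 := by
  obtain ⟨hg, ⟨hα, hxg, -⟩, hbest⟩ := h
  have hhalf : x + (α / 2) • g ∈ P := by
    have := hP.add_smul_mem hx hxg (t := 1 / 2) ⟨by norm_num, by norm_num⟩
    rwa [smul_smul, one_div_mul_eq_div] at this
  have := hbest g (α / 2) hg (by positivity) hhalf
  simp only [dotIC_smul] at this
  nlinarith

lemma div_mul_mul_le_of_div_le_div {ω M α αs N Ns t ts : ℝ} (hω : 0 ≤ ω) (hωα : ω ≤ α * N)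
    (hN : 0 < N) (hNs : 0 < Ns) (hαs : 0 < αs) (hM : αs * Ns ≤ M) (hts : 0 ≤ ts)
    (hratio : ts / Ns ≤ t / N) : ω / M * (αs * ts) ≤ α * t := by
  have hM₀ : 0 < M := (mul_pos hαs hNs).trans_le hM
  calc ω / M * (αs * ts) = ω * (αs * Ns / M) * (ts / Ns) := by field_simp
    _ ≤ ω * 1 * (ts / Ns) := by gcongr; exact (div_le_one hM₀).2 hM
    _ ≤ α * N * (t / N) := by
        rw [mul_one]; exact mul_le_mul hωα hratio (by positivity) (hω.trans hωα)
    _ = α * t := by field_simp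

theorem steepest_descent_approximates_greatest_improvement_general
    (A : Matrix (Fin mA) (Fin n) ℤ) (B : Matrix (Fin mB) (Fin n) ℤ)
    (b : Fin mA → ℤ) (d : Fin mB → ℤ) (c : Fin n → ℤ)
    (hbdd : Bornology.IsBounded (Pset A B b d))
    (x : Fin n → ℝ) (hx : x ∈ Set.extremePoints ℝ (Pset A B b d))
    (z : Fin n → ℝ) (α : ℝ) (hsteep : IsSteepAug A B (Pset A B b d) c x z α)
    (zs : Fin n → ℝ) (αs : ℝ) (hgia : IsGIAug A B (Pset A B b d) c x zs αs) :
    (omega1 (Pset A B b d) / M1 (Pset A B b d)) * (dotIC c x - dotIC c (x + αs • zs)) ≤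
      dotIC c x - dotIC c (x + α • z) := by
  have hts := neg_nonneg.2 (dotIC_nonpos_of_isGIAug convex_Pset hx.1 hgia)
  obtain ⟨hz, hzmax, hzbest⟩ := hsteep
  obtain ⟨hzs, ⟨hαs, hxzs, -⟩, -⟩ := hgia
  have hratio := hzbest zs hzs ⟨αs, hαs, hxzs⟩
  have hM : αs * norm1 zs ≤ M1 (Pset A B b d) := by
    have := norm1_sub_le_M1 finite_extremePoints_Pset (convexHull_extremePoints_Pset hbdd) hxzs hx.1
    rwa [add_sub_cancel_left, norm1_smul, abs_of_pos hαs] at this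
  rw [dotIC_sub_dotIC_add_smul, dotIC_sub_dotIC_add_smul]
  exact div_mul_mul_le_of_div_le_div (omega1_nonneg _) (omega1_le_of_isMaxAug hbdd hx hzmax)
    (norm1_pos hz.1.1) (norm1_pos hzs.1.1) hαs hM hts hratio

/-- a steepest-descent augmentation at a non-optimal vertex of a bounded
polyhedron is an `(M₁/ω₁)`-approximate greatest-improvement augmentation. -/
theorem steepest_descent_approximates_greatest_improvement
    (A : Matrix (Fin mA) (Fin n) ℤ) (B : Matrix (Fin mB) (Fin n) ℤ)
    (b : Fin mA → ℤ) (d : Fin mB → ℤ) (c : Fin n → ℤ)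
    (hmB : 1 ≤ mB)
    (hA : (rmat A).rank = mA)
    (hAB : (rmat (Matrix.fromRows A B)).rank = n)
    (hbdd : Bornology.IsBounded (Pset A B b d))
    (x : Fin n → ℝ) (hx : x ∈ Set.extremePoints ℝ (Pset A B b d))
    (hnonopt : ∃ y ∈ Pset A B b d, dotIC c y < dotIC c x)
    (z : Fin n → ℝ) (α : ℝ) (hsteep : IsSteepAug A B (Pset A B b d) c x z α)
    (zs : Fin n → ℝ) (αs : ℝ) (hgia : IsGIAug A B (Pset A B b d) c x zs αs) :
    (omega1 (Pset A B b d) / M1 (Pset A B b d)) * (dotIC c x - dotIC c (x + αs • zs)) ≤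
      dotIC c x - dotIC c (x + α • z) :=
  steepest_descent_approximates_greatest_improvement_general A B b d c hbdd x hx z α hsteep zs αs
    hgia
end
end
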